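/- arXiv:1003.4261 — 6 statements merged into one kernel-verified Lean document; each statement's English description precedes it below -/
import Mathlib

section
/- For any measure space (Ω,μ) and any f,g ∈ L¹(Ω,μ), the map T sending h to the function (ω,x) ↦ sign indicator (1 if 0 < x ≤ h(ω), -1 if h(ω) < x < 0, 0 otherwise) satisfies ‖T(f) - T(g)‖_{L^p(Ω×ℝ)}^p = ‖f - g‖_{L¹(Ω,μ)} for every p > 0. -/
open MeasureTheory
open ENNReal

open Classical in
noncomputable def signT {Ω : Type*} (h : Ω → ℝ) : Ω × ℝ → ℝ := fun q =>
  if 0 < q.2 ∧ q.2 ≤ h q.1 then 1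
  else if h q.1 < q.2 ∧ q.2 < 0 then -1
  else 0

open Classical in
noncomputable def s' (a x : ℝ) : ℝ :=
  if 0 < x ∧ x ≤ a then 1 else if a < x ∧ x < 0 then -1 else 0

lemma s'_cases (a b x : ℝ) : |s' a x - s' b x| = 0 ∨ |s' a x - s' b x| = 1 := by
  unfold s'
  split_ifs <;> norm_num <;> linarith

lemma point (a b x : ℝ) (hab : a ≤ b) :
    ENNReal.ofReal |s' a x - s' b x|
      = (Set.Ioc a b \ {0}).indicator (fun _ => (1:ℝ≥0∞)) x := by
  simp only [s', Set.indicator, Set.mem_diff, Set.mem_Ioc, Set.mem_singleton_iff]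
  split_ifs <;> simp_all <;>
    first
      | linarith
      | (obtain ⟨-, hne⟩ := ‹(a < x ∧ x ≤ b) ∧ ¬x = 0›
         exact hne (le_antisymm ‹x ≤ 0› ‹0 ≤ x›))

lemma key (a b : ℝ) :
    ∫⁻ x, ENNReal.ofReal |s' a x - s' b x| = ENNReal.ofReal |a - b| := by
  wlog hab : a ≤ b with H
  · simp_rw [abs_sub_comm (s' a _), abs_sub_comm a b]
    exact H b a (le_of_not_ge hab)
  have h1 : ∀ x, ENNReal.ofReal |s' a x - s' b x|
      = (Set.Ioc a b \ {0}).indicator (fun _ => (1:ℝ≥0∞)) x := fun x => point a b x hab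
  simp_rw [h1]
  rw [lintegral_indicator ((measurableSet_Ioc).diff (measurableSet_singleton 0))]
  simp only [lintegral_const, one_mul, MeasurableSet.univ, Measure.restrict_apply,
    Set.univ_inter]
  rw [measure_diff_null (by simp), Real.volume_Ioc,
    abs_of_nonpos (by linarith : a - b ≤ 0)]
  ring_nf

lemma signT_eq {Ω : Type*} (h : Ω → ℝ) (q : Ω × ℝ) : signT h q = s' (h q.1) q.2 := rfl

lemma measurable_signT {Ω : Type*} [MeasurableSpace Ω] {F : Ω → ℝ} (hF : Measurable F) :
    Measurable (signT F) := by
  have h1 : MeasurableSet {q : Ω × ℝ | 0 < q.2 ∧ q.2 ≤ F q.1} :=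
    (measurableSet_lt measurable_const measurable_snd).inter
      (measurableSet_le measurable_snd (hF.comp measurable_fst))
  have h2 : MeasurableSet {q : Ω × ℝ | F q.1 < q.2 ∧ q.2 < 0} :=
    (measurableSet_lt (hF.comp measurable_fst) measurable_snd).inter
      (measurableSet_lt measurable_snd measurable_const)
  exact Measurable.ite h1 measurable_const
    (Measurable.ite h2 measurable_const measurable_const)

lemma ae_prod_fst {Ω : Type*} [MeasurableSpace Ω] {μ : Measure Ω} {u v : Ω → ℝ}
    (h : u =ᵐ[μ] v) : ∀ᵐ q ∂(μ.prod (volume : Measure ℝ)), u q.1 = v q.1 := by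
  simp only [ae_iff] at h ⊢
  obtain ⟨N, hsub, hNm, hN0⟩ := exists_measurable_superset_of_null h
  apply measure_mono_null (t := N ×ˢ Set.univ)
    (fun q hq => Set.mk_mem_prod (hsub hq) (Set.mem_univ q.2))
  rw [Measure.prod_prod, hN0, zero_mul]


/-- For f, g ∈ L¹(Ω,μ), ‖T(f)-T(g)‖_{L^p(Ω×ℝ)}^p = ‖f-g‖_{L¹(Ω,μ)} for every p > 0. -/
theorem stmt0 {Ω : Type*} [MeasurableSpace Ω] (μ : Measure Ω) (f g : Ω → ℝ)
    (hf : Integrable f μ) (hg : Integrable g μ) (p : ℝ) (hp : 0 < p) :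
    ∫⁻ q, ENNReal.ofReal (|signT f q - signT g q| ^ p) ∂(μ.prod volume)
      = ∫⁻ ω, ENNReal.ofReal |f ω - g ω| ∂μ := by
  have hfa := hf.aestronglyMeasurable.aemeasurable
  have hga := hg.aestronglyMeasurable.aemeasurable
  set F := hfa.mk f with hFdef
  set G := hga.mk g with hGdef
  have hFm : Measurable F := hfa.measurable_mk
  have hGm : Measurable G := hga.measurable_mk
  have hfF : f =ᵐ[μ] F := hfa.ae_eq_mk
  have hgG : g =ᵐ[μ] G := hga.ae_eq_mk
  -- replace f, g by F, G on both sides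
  have eL : ∫⁻ q, ENNReal.ofReal (|signT f q - signT g q| ^ p) ∂(μ.prod volume)
      = ∫⁻ q, ENNReal.ofReal (|signT F q - signT G q| ^ p) ∂(μ.prod volume) := by
    refine lintegral_congr_ae ?_
    filter_upwards [ae_prod_fst hfF, ae_prod_fst hgG] with q h1 h2
    rw [signT_eq f, signT_eq g, signT_eq F, signT_eq G, h1, h2]
  have eR : ∫⁻ ω, ENNReal.ofReal |f ω - g ω| ∂μ
      = ∫⁻ ω, ENNReal.ofReal |F ω - G ω| ∂μ := by
    refine lintegral_congr_ae ?_
    filter_upwards [hfF, hgG] with ω h1 h2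
    rw [h1, h2]
  rw [eL, eR]
  -- drop the power p
  have epow : ∫⁻ q, ENNReal.ofReal (|signT F q - signT G q| ^ p) ∂(μ.prod volume)
      = ∫⁻ q, ENNReal.ofReal |signT F q - signT G q| ∂(μ.prod volume) := by
    refine lintegral_congr fun q => ?_
    rw [signT_eq, signT_eq]
    rcases s'_cases (F q.1) (G q.1) q.2 with h | h <;> rw [h]
    · rw [Real.zero_rpow hp.ne']
    · rw [Real.one_rpow]
  rw [epow]
  have hmeas : AEMeasurable (fun q => ENNReal.ofReal |signT F q - signT G q|)
      (μ.prod volume) :=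
    (((measurable_signT hFm).sub (measurable_signT hGm)).abs.ennreal_ofReal).aemeasurable
  rw [lintegral_prod _ hmeas]
  exact lintegral_congr fun ω => key (F ω) (G ω)
end

section
/- Cut cone representation: for any finite subset X ⊆ L¹(Ω,μ) there exist nonnegative reals (β_S)_{S ⊆ X} such that for all f,g ∈ X, ‖f-g‖₁ = Σ_{S ⊆ X} β_S · |𝟙_S(f) - 𝟙_S(g)|. -/
/-!
Fix a point ω and put v h = h(ω). Cutting the line at a level t gives the subset
{h ∈ X | t < v h}, and |v f - v g| is the length of the set of levels whose cut separates f from g.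
The levels producing a given cut S form the interval [max_{X \ S} v, min_S v), so grouping levels
by their cut gives |v f - v g| = Σ_S β_S(ω) |𝟙_S(f) - 𝟙_S(g)| with β_S(ω) the length of that
interval. Each β_S is integrable in ω, and integrating the pointwise identity gives the theorem.
-/

open MeasureTheory
open Classical

section Cuts

variable {α : Type*} [DecidableEq α] (X : Finset α) (v : α → ℝ)

noncomputable def thresholdCut (t : ℝ) : Finset α := X.filter (fun a => t < v a)

noncomputable def cutWeight (S : Finset α) : ℝ :=
  if h : S.Nonempty ∧ (X \ S).Nonempty then max (S.inf' h.1 v - (X \ S).sup' h.2 v) 0 else 0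

lemma cutWeight_nonneg (S : Finset α) : 0 ≤ cutWeight X v S := by
  unfold cutWeight
  split_ifs <;> simp

variable {X v}

lemma cutWeight_of_nonempty {S : Finset α} (hS : S.Nonempty) (hXS : (X \ S).Nonempty) :
    cutWeight X v S = max (S.inf' hS v - (X \ S).sup' hXS v) 0 :=
  dif_pos ⟨hS, hXS⟩

lemma cutWeight_le_abs_sub {S : Finset α} {a b : α} (ha : a ∈ S) (hb : b ∈ X \ S) :
    cutWeight X v S ≤ |v a - v b| := by
  rw [cutWeight_of_nonempty ⟨a, ha⟩ ⟨b, hb⟩]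
  have hinf := Finset.inf'_le v ha
  have hsup := Finset.le_sup' v hb
  exact max_le (by linarith [le_abs_self (v a - v b)]) (abs_nonneg _)

lemma thresholdCut_preimage_singleton {S : Finset α} (hSX : S ⊆ X) (hS : S.Nonempty)
    (hXS : (X \ S).Nonempty) :
    thresholdCut X v ⁻¹' {S} = Set.Ico ((X \ S).sup' hXS v) (S.inf' hS v) := by
  ext t
  simp only [Set.mem_preimage, Set.mem_singleton_iff, Set.mem_Ico, Finset.sup'_le_iff,
    Finset.lt_inf'_iff, Finset.mem_sdiff, thresholdCut, Finset.ext_iff, Finset.mem_filter]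
  constructor
  · intro h
    exact ⟨fun b hb => not_lt.1 fun hlt => hb.2 ((h b).1 ⟨hb.1, hlt⟩),
      fun a ha => ((h a).2 ha).2⟩
  · rintro ⟨hle, hlt⟩ a
    by_cases ha : a ∈ S
    · exact ⟨fun _ => ha, fun _ => ⟨hSX ha, hlt a ha⟩⟩
    · exact ⟨fun h => absurd (hle a ⟨h.1, ha⟩) (not_le.2 h.2), fun h => absurd h ha⟩

lemma cutWeight_eq_volume_real {S : Finset α} (hSX : S ⊆ X) (hS : S.Nonempty)
    (hXS : (X \ S).Nonempty) :
    cutWeight X v S = volume.real (thresholdCut X v ⁻¹' {S}) := by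
  rw [thresholdCut_preimage_singleton hSX hS hXS, Real.volume_real_Ico,
    cutWeight_of_nonempty hS hXS]

lemma thresholdCut_preimage_separating {f g : α} (hf : f ∈ X) (hg : g ∈ X) :
    thresholdCut X v ⁻¹' ↑(X.powerset.filter (fun S => f ∈ S ∧ g ∉ S)) =
      Set.Ico (v g) (v f) := by
  ext t
  simp [thresholdCut, hf, hg, and_comm]

lemma sum_cutWeight_separating {f g : α} (hf : f ∈ X) (hg : g ∈ X) :
    ∑ S ∈ X.powerset.filter (fun S => f ∈ S ∧ g ∉ S), cutWeight X v S = max (v f - v g) 0 := by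
  set P := X.powerset.filter (fun S => f ∈ S ∧ g ∉ S)
  have hP : ∀ S ∈ P, S ⊆ X ∧ S.Nonempty ∧ (X \ S).Nonempty := by
    intro S hS
    simp only [P, Finset.mem_filter, Finset.mem_powerset] at hS
    exact ⟨hS.1, ⟨f, hS.2.1⟩, ⟨g, Finset.mem_sdiff.2 ⟨hg, hS.2.2⟩⟩⟩
  have hfiber : ∀ S ∈ P, ∃ a b, thresholdCut X v ⁻¹' {S} = Set.Ico a b := fun S hS =>
    let ⟨hSX, hS, hXS⟩ := hP S hS
    ⟨_, _, thresholdCut_preimage_singleton hSX hS hXS⟩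
  calc ∑ S ∈ P, cutWeight X v S
      = ∑ S ∈ P, volume.real (thresholdCut X v ⁻¹' {S}) :=
        Finset.sum_congr rfl fun S hS => cutWeight_eq_volume_real (hP S hS).1 (hP S hS).2.1
          (hP S hS).2.2
    _ = volume.real (thresholdCut X v ⁻¹' P) := by
        refine sum_measureReal_preimage_singleton P (fun S hS => ?_) (fun S hS => ?_)
        all_goals obtain ⟨a, b, hab⟩ := hfiber S hS; rw [hab]
        exacts [measurableSet_Ico, measure_Ico_lt_top.ne]
    _ = max (v f - v g) 0 := by
        rw [thresholdCut_preimage_separating hf hg, Real.volume_real_Ico]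

theorem sum_cutWeight_mul_abs_sub_indicator {f g : α} (hf : f ∈ X) (hg : g ∈ X) :
    ∑ S ∈ X.powerset, cutWeight X v S *
        |(if f ∈ S then (1 : ℝ) else 0) - (if g ∈ S then (1 : ℝ) else 0)| = |v f - v g| := by
  have hsplit : ∀ S : Finset α,
      cutWeight X v S * |(if f ∈ S then (1 : ℝ) else 0) - (if g ∈ S then (1 : ℝ) else 0)|
        = (if f ∈ S ∧ g ∉ S then cutWeight X v S else 0)
          + (if g ∈ S ∧ f ∉ S then cutWeight X v S else 0) := by
    intro S
    by_cases hfS : f ∈ S <;> by_cases hgS : g ∈ S <;> simp [hfS, hgS]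
  rw [Finset.sum_congr rfl fun S _ => hsplit S, Finset.sum_add_distrib, ← Finset.sum_filter,
    ← Finset.sum_filter, sum_cutWeight_separating hf hg, sum_cutWeight_separating hg hf]
  rcases le_total (v f) (v g) with h | h
  · rw [abs_of_nonpos (by linarith), max_eq_right (by linarith), max_eq_left (by linarith)]; ring
  · rw [abs_of_nonneg (by linarith), max_eq_left (by linarith), max_eq_right (by linarith)]; ring

end Cuts

section Integrability

variable {ι Ω : Type*} [MeasurableSpace Ω] {μ : Measure Ω}

lemma Finset.aestronglyMeasurable_inf' {s : Finset ι} (hs : s.Nonempty) {F : ι → Ω → ℝ}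
    (hF : ∀ i ∈ s, AEStronglyMeasurable (F i) μ) :
    AEStronglyMeasurable (fun ω => s.inf' hs (fun i => F i ω)) μ := by
  simpa only [← Finset.inf'_apply] using
    Finset.inf'_induction (p := (AEStronglyMeasurable · μ)) hs F (fun _ hf _ hg => hf.inf hg) hF

lemma Finset.aestronglyMeasurable_sup' {s : Finset ι} (hs : s.Nonempty) {F : ι → Ω → ℝ}
    (hF : ∀ i ∈ s, AEStronglyMeasurable (F i) μ) :
    AEStronglyMeasurable (fun ω => s.sup' hs (fun i => F i ω)) μ := by
  simpa only [← Finset.sup'_apply] using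
    Finset.sup'_induction (p := (AEStronglyMeasurable · μ)) hs F (fun _ hf _ hg => hf.sup hg) hF

variable [DecidableEq ι]

lemma integrable_cutWeight (X : Finset ι) {F : ι → Ω → ℝ} (hF : ∀ i, Integrable (F i) μ)
    (S : Finset ι) : Integrable (fun ω => cutWeight X (fun i => F i ω) S) μ := by
  by_cases hS : S.Nonempty ∧ (X \ S).Nonempty
  swap
  · simp only [cutWeight, hS, dite_false]
    exact integrable_zero _ _ _
  obtain ⟨⟨a, ha⟩, ⟨b, hb⟩⟩ := hS
  have hmeas : AEStronglyMeasurable (fun ω => cutWeight X (fun i => F i ω) S) μ := by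
    simp only [cutWeight_of_nonempty ⟨a, ha⟩ ⟨b, hb⟩]
    exact ((Finset.aestronglyMeasurable_inf' _ fun i _ => (hF i).aestronglyMeasurable).sub
      (Finset.aestronglyMeasurable_sup' _ fun i _ => (hF i).aestronglyMeasurable)).sup
        aestronglyMeasurable_const
  refine (((hF a).sub (hF b)).abs).mono' hmeas
    (Filter.Eventually.of_forall fun ω => ?_)
  rw [Real.norm_of_nonneg (cutWeight_nonneg _ _ _)]
  exact cutWeight_le_abs_sub ha hb

end Integrability

/-- Cut cone representation: for a finite subset X of L¹(Ω,μ) there are nonnegative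
reals (β_S)_{S ⊆ X} with ‖f-g‖₁ = Σ_{S ⊆ X} β_S |𝟙_S(f) - 𝟙_S(g)| for all f,g ∈ X. -/
theorem stmt2 {Ω : Type*} [MeasurableSpace Ω] (μ : Measure Ω)
    (X : Finset (Lp ℝ 1 μ)) :
    ∃ β : Finset (Lp ℝ 1 μ) → ℝ, (∀ S, 0 ≤ β S) ∧
      ∀ f ∈ X, ∀ g ∈ X,
        ‖f - g‖ = ∑ S ∈ X.powerset,
          β S * |(if f ∈ S then (1:ℝ) else 0) - (if g ∈ S then (1:ℝ) else 0)| := by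
  refine ⟨fun S => ∫ ω, cutWeight X (fun h => h ω) S ∂μ,
    fun S => integral_nonneg fun ω => cutWeight_nonneg _ _ S, fun f hf g hg => ?_⟩
  have hint : ∀ S, Integrable (fun ω => cutWeight X (fun h => h ω) S) μ :=
    integrable_cutWeight X (fun h => L1.integrable_coeFn h)
  calc ‖f - g‖ = ∫ ω, |f ω - g ω| ∂μ := by
        simp only [← dist_eq_norm, L1.dist_eq_integral_dist, Real.dist_eq]
    _ = ∫ ω, ∑ S ∈ X.powerset, cutWeight X (fun h => h ω) S *
          |(if f ∈ S then (1:ℝ) else 0) - (if g ∈ S then (1:ℝ) else 0)| ∂μ := by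
        simp only [sum_cutWeight_mul_abs_sub_indicator hf hg]
    _ = _ := by
        rw [integral_finsetSum _ fun S _ => (hint S).mul_const _]
        simp only [integral_mul_const]
end

section
/- Reformulation of Sparsest Cut over L¹: for symmetric C,D : {1,…,n}² → [0,∞) with D not identically zero, the minimum over nonempty proper subsets S of {1,…,n} of (Σᵢⱼ C(i,j)|𝟙_S(i)-𝟙_S(j)|)/(Σᵢⱼ D(i,j)|𝟙_S(i)-𝟙_S(j)|) equals the infimum over all f₁,…,fₙ ∈ L¹ of (Σᵢⱼ C(i,j)‖fᵢ-fⱼ‖₁)/(Σᵢⱼ D(i,j)‖fᵢ-fⱼ‖₁). -/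
/-!
For a weight `E = C - m D`, the quantity `∑ E i j * |a i - a j|` of a line embedding `a` is the
integral over thresholds `t` of the same quantity for the cut `{k | t < a k}`; the quantity of an
L¹ embedding `f` is in turn the integral over `x` of that of the line embedding `i ↦ f i x`. Hence
if `m` is below every cut ratio, `m` is below every L¹ ratio. Since cuts realise L¹ ratios through
`i ↦ 𝟙_S(i) • g` with `‖g‖ = 1`, and there are finitely many cuts, both infima coincide.
-/

open MeasureTheory

noncomputable abbrev SpaceL1 := Lp ℝ 1 (volume : Measure ℝ)

def cutInd {n : ℕ} (S : Finset (Fin n)) (i : Fin n) : ℝ := if i ∈ S then 1 else 0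

section WeightedSums

variable {α ι : Type*} [MeasurableSpace α] {μ : Measure α} [Fintype ι]

theorem sum_sum_mul_integral_nonneg (E : ι → ι → ℝ) {F : ι → ι → α → ℝ}
    (hF : ∀ i j, Integrable (F i j) μ) (hpt : ∀ x, 0 ≤ ∑ i, ∑ j, E i j * F i j x) :
    0 ≤ ∑ i, ∑ j, E i j * ∫ x, F i j x ∂μ := by
  have hswap : ∫ x, ∑ i, ∑ j, E i j * F i j x ∂μ = ∑ i, ∑ j, E i j * ∫ x, F i j x ∂μ := by
    rw [integral_finsetSum _ fun i _ => integrable_finsetSum _ fun j _ => (hF i j).const_mul _]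
    refine Finset.sum_congr rfl fun i _ => ?_
    rw [integral_finsetSum _ fun j _ => (hF i j).const_mul _]
    simp only [integral_const_mul]
  exact hswap ▸ integral_nonneg hpt

theorem sum_sum_sub_mul_mul (C D x : ι → ι → ℝ) (m : ℝ) :
    ∑ i, ∑ j, (C i j - m * D i j) * x i j =
      ∑ i, ∑ j, C i j * x i j - m * ∑ i, ∑ j, D i j * x i j := by
  simp only [sub_mul, Finset.sum_sub_distrib, Finset.mul_sum, mul_assoc]

end WeightedSums

theorem abs_ite_lt_sub_ite_lt (x y t : ℝ) :
    |(if t < x then 1 else 0 : ℝ) - if t < y then 1 else 0| =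
      (Set.Ico (min x y) (max x y)).indicator (fun _ => 1) t := by
  simp only [Set.indicator_apply, Set.mem_Ico, min_le_iff, lt_max_iff]
  split_ifs <;> norm_num <;> grind

theorem integrable_abs_ite_lt_sub_ite_lt (x y : ℝ) :
    Integrable (fun t => |(if t < x then 1 else 0 : ℝ) - if t < y then 1 else 0|) := by
  simp only [abs_ite_lt_sub_ite_lt]
  refine (integrableOn_const ?_).integrable_indicator measurableSet_Ico
  simp [Real.volume_Ico]

theorem integral_abs_ite_lt_sub_ite_lt (x y : ℝ) :
    ∫ t, |(if t < x then 1 else 0 : ℝ) - if t < y then 1 else 0| = |x - y| := by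
  simp only [abs_ite_lt_sub_ite_lt]
  rw [integral_indicator_const _ measurableSet_Ico, measureReal_def, Real.volume_Ico,
    ENNReal.toReal_ofReal (sub_nonneg.2 min_le_max), max_sub_min_eq_abs, smul_eq_mul, mul_one,
    abs_sub_comm]

section CutCone

variable {n : ℕ}

theorem cutInd_filter_lt (a : Fin n → ℝ) (t : ℝ) (i : Fin n) :
    cutInd {k | t < a k} i = if t < a i then 1 else 0 := by
  simp [cutInd]

theorem sum_abs_sub_nonneg_of_forall_cut (E : Fin n → Fin n → ℝ)
    (hE : ∀ S : Finset (Fin n), 0 ≤ ∑ i, ∑ j, E i j * |cutInd S i - cutInd S j|)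
    (a : Fin n → ℝ) : 0 ≤ ∑ i, ∑ j, E i j * |a i - a j| := by
  have h := sum_sum_mul_integral_nonneg (μ := volume) E
    (fun i j => integrable_abs_ite_lt_sub_ite_lt (a i) (a j))
    (fun t => by simpa only [cutInd_filter_lt] using hE {k | t < a k})
  simpa only [integral_abs_ite_lt_sub_ite_lt] using h

theorem sum_norm_sub_nonneg_of_forall_cut {α : Type*} [MeasurableSpace α] {μ : Measure α}
    (E : Fin n → Fin n → ℝ)
    (hE : ∀ S : Finset (Fin n), 0 ≤ ∑ i, ∑ j, E i j * |cutInd S i - cutInd S j|)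
    (f : Fin n → Lp ℝ 1 μ) : 0 ≤ ∑ i, ∑ j, E i j * ‖f i - f j‖ := by
  have hnorm : ∀ i j, ‖f i - f j‖ = ∫ x, |f i x - f j x| ∂μ := fun i j => by
    rw [L1.norm_eq_integral_norm]
    refine integral_congr_ae ?_
    filter_upwards [Lp.coeFn_sub (f i) (f j)] with x hx
    rw [hx, Pi.sub_apply, Real.norm_eq_abs]
  simp only [hnorm]
  exact sum_sum_mul_integral_nonneg E
    (fun i j => ((L1.integrable_coeFn (f i)).sub (L1.integrable_coeFn (f j))).abs)
    (fun x => sum_abs_sub_nonneg_of_forall_cut E hE fun i => f i x)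

theorem mul_sum_norm_sub_le_of_forall_cut {α : Type*} [MeasurableSpace α] {μ : Measure α}
    (C D : Fin n → Fin n → ℝ) (m : ℝ)
    (hm : ∀ S : Finset (Fin n), S.Nonempty → S ≠ Finset.univ →
      m * ∑ i, ∑ j, D i j * |cutInd S i - cutInd S j| ≤
        ∑ i, ∑ j, C i j * |cutInd S i - cutInd S j|)
    (f : Fin n → Lp ℝ 1 μ) :
    m * ∑ i, ∑ j, D i j * ‖f i - f j‖ ≤ ∑ i, ∑ j, C i j * ‖f i - f j‖ := by
  have hE : ∀ S : Finset (Fin n),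
      0 ≤ ∑ i, ∑ j, (C i j - m * D i j) * |cutInd S i - cutInd S j| := by
    intro S
    rw [sum_sum_sub_mul_mul, sub_nonneg]
    rcases S.eq_empty_or_nonempty with rfl | hne
    · simp [cutInd]
    by_cases huniv : S = Finset.univ
    · simp [cutInd, huniv]
    exact hm S hne huniv
  have h := sum_norm_sub_nonneg_of_forall_cut _ hE f
  rwa [sum_sum_sub_mul_mul, sub_nonneg] at h

end CutCone

section Ratios

variable {n : ℕ} {C D : Fin n → Fin n → ℝ}

def cutRatios (C D : Fin n → Fin n → ℝ) : Set ℝ :=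
  {r : ℝ | ∃ S : Finset (Fin n), S.Nonempty ∧ S ≠ Finset.univ ∧
    r = (∑ i, ∑ j, C i j * |cutInd S i - cutInd S j|) /
      (∑ i, ∑ j, D i j * |cutInd S i - cutInd S j|)}

def l1Ratios (C D : Fin n → Fin n → ℝ) : Set ℝ :=
  {r : ℝ | ∃ f : Fin n → SpaceL1, 0 < ∑ i, ∑ j, D i j * ‖f i - f j‖ ∧
    r = (∑ i, ∑ j, C i j * ‖f i - f j‖) / (∑ i, ∑ j, D i j * ‖f i - f j‖)}

theorem cutRatios_finite : (cutRatios C D).Finite := by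
  refine (Set.finite_range fun S : Finset (Fin n) =>
    (∑ i, ∑ j, C i j * |cutInd S i - cutInd S j|) /
      (∑ i, ∑ j, D i j * |cutInd S i - cutInd S j|)).subset ?_
  rintro _ ⟨S, -, -, rfl⟩
  exact ⟨S, rfl⟩

theorem SpaceL1.exists_norm_eq_one : ∃ g : SpaceL1, ‖g‖ = 1 := by
  have hvol : volume (Set.Ioc (0 : ℝ) 1) ≠ ⊤ := by simp
  refine ⟨indicatorConstLp 1 measurableSet_Ioc hvol (1 : ℝ), ?_⟩
  rw [norm_indicatorConstLp one_ne_zero ENNReal.one_ne_top]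
  simp

variable (hpos : ∀ S : Finset (Fin n), S.Nonempty → S ≠ Finset.univ →
  0 < ∑ i, ∑ j, D i j * |cutInd S i - cutInd S j|)
include hpos

theorem cutRatios_subset_l1Ratios : cutRatios C D ⊆ l1Ratios C D := by
  obtain ⟨g, hg⟩ := SpaceL1.exists_norm_eq_one
  rintro r ⟨S, hne, huniv, rfl⟩
  have hnorm : ∀ i j, ‖cutInd S i • g - cutInd S j • g‖ = |cutInd S i - cutInd S j| := by
    intro i j
    rw [← sub_smul, norm_smul, hg, mul_one, Real.norm_eq_abs]
  exact ⟨fun i => cutInd S i • g, by simpa only [hnorm] using hpos S hne huniv,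
    by simp only [hnorm]⟩

theorem lowerBounds_cutRatios_subset :
    lowerBounds (cutRatios C D) ⊆ lowerBounds (l1Ratios C D) := by
  rintro m hm _ ⟨f, hf, rfl⟩
  rw [le_div_iff₀ hf]
  refine mul_sum_norm_sub_le_of_forall_cut C D m (fun S hne huniv => ?_) f
  rw [← le_div_iff₀ (hpos S hne huniv)]
  exact hm ⟨S, hne, huniv, rfl⟩

theorem exists_mem_cutRatios_le {y : ℝ} (hy : y ∈ l1Ratios C D) :
    ∃ x ∈ cutRatios C D, x ≤ y := by
  rcases (cutRatios C D).eq_empty_or_nonempty with hempty | hne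
  · have := lowerBounds_cutRatios_subset hpos (by simp [hempty] : y + 1 ∈ _) hy
    linarith
  · exact ⟨sInf _, hne.csInf_mem cutRatios_finite, lowerBounds_cutRatios_subset hpos
      (fun _ hx => csInf_le cutRatios_finite.bddBelow hx) hy⟩

end Ratios

theorem stmt4_general (n : ℕ) (C D : Fin n → Fin n → ℝ)
    (hpos : ∀ S : Finset (Fin n), S.Nonempty → S ≠ Finset.univ →
      0 < ∑ i, ∑ j, D i j * |cutInd S i - cutInd S j|) :
    sInf {r : ℝ | ∃ S : Finset (Fin n), S.Nonempty ∧ S ≠ Finset.univ ∧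
        r = (∑ i, ∑ j, C i j * |cutInd S i - cutInd S j|) /
            (∑ i, ∑ j, D i j * |cutInd S i - cutInd S j|)} =
    sInf {r : ℝ | ∃ f : Fin n → SpaceL1,
        0 < ∑ i, ∑ j, D i j * ‖f i - f j‖ ∧
        r = (∑ i, ∑ j, C i j * ‖f i - f j‖) /
            (∑ i, ∑ j, D i j * ‖f i - f j‖)} :=
  csInf_eq_csInf_of_forall_exists_le
    (fun x hx => ⟨x, cutRatios_subset_l1Ratios hpos hx, le_rfl⟩)
    (fun _ hy => exists_mem_cutRatios_le hpos hy)

/-- Sparsest Cut reformulation over L¹: the minimum cut sparsity equals the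
infimum of the corresponding ratio over all configurations f₁,…,fₙ ∈ L¹. -/
theorem stmt4 (n : ℕ) (hn : 2 ≤ n) (C D : Fin n → Fin n → ℝ)
    (hCsym : ∀ i j, C i j = C j i) (hDsym : ∀ i j, D i j = D j i)
    (hC : ∀ i j, 0 ≤ C i j) (hD : ∀ i j, 0 ≤ D i j)
    (hpos : ∀ S : Finset (Fin n), S.Nonempty → S ≠ Finset.univ →
      0 < ∑ i, ∑ j, D i j * |cutInd S i - cutInd S j|) :
    sInf {r : ℝ | ∃ S : Finset (Fin n), S.Nonempty ∧ S ≠ Finset.univ ∧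
        r = (∑ i, ∑ j, C i j * |cutInd S i - cutInd S j|) /
            (∑ i, ∑ j, D i j * |cutInd S i - cutInd S j|)} =
    sInf {r : ℝ | ∃ f : Fin n → SpaceL1,
        0 < ∑ i, ∑ j, D i j * ‖f i - f j‖ ∧
        r = (∑ i, ∑ j, C i j * ‖f i - f j‖) /
            (∑ i, ∑ j, D i j * ‖f i - f j‖)} :=
  stmt4_general n C D hpos
end

section
/- Cheeger inequality for L¹-valued maps: if G = (V,E') is a finite graph with edge expansion α(G) (every S ⊆ V with |S| ≤ |V|/2 has at least α|S|·|E'|/|V| edges to its complement), then for every f : V → L¹, (1/|E'|)·Σ_{xy ∈ E'} ‖f(x)-f(y)‖₁ ≥ (α/(2|V|²))·Σ_{x,y ∈ V} ‖f(x)-f(y)‖₁. -/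
/-!
Both sides are linear in the semimetric `(x, y) ↦ ‖f x - f y‖₁`, so the inequality is preserved
under integrating a family of semimetrics. Since
`‖f x - f y‖₁ = ∫ ω, ∫ t, δ_t (f x ω) (f y ω)` with `δ_t` the cut semimetric of `Iic t` on `ℝ`,
it suffices to treat the cut semimetric `δ_S` of a vertex set `S`. Its sum over all pairs is
`2 |S| |Sᶜ|` and its sum over edges is at least `|∂S|`, so the expansion bound applied to the
smaller of `S` and `Sᶜ` (which have the same cut semimetric) gives the claim.
-/

open MeasureTheory Finset

noncomputable def cutDist {X : Type*} (s : Set X) (x y : X) : ℝ :=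
  |s.indicator 1 x - s.indicator 1 y|

lemma cutDist_compl {X : Type*} (s : Set X) : cutDist sᶜ = cutDist s := by
  ext x y
  simp only [cutDist, Set.indicator_compl, Pi.sub_apply, Pi.one_apply]
  rw [abs_sub_comm]
  ring_nf

lemma cutDist_preimage {X Y : Type*} (g : X → Y) (s : Set Y) :
    cutDist (g ⁻¹' s) = fun x y => cutDist s (g x) (g y) :=
  rfl

lemma cutDist_Iic_eq_indicator (a b t : ℝ) :
    cutDist (Set.Iic t) a b = (Set.Ico (min a b) (max a b)).indicator 1 t := by
  rcases le_total a b with h | h <;>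
  by_cases ha : a ≤ t <;> by_cases hb : b ≤ t <;>
  simp [cutDist, Set.indicator, h, ha, hb] <;> linarith

lemma integrable_cutDist_Iic (a b : ℝ) : Integrable (fun t => cutDist (Set.Iic t) a b) := by
  simp only [cutDist_Iic_eq_indicator]
  exact (integrable_indicator_iff measurableSet_Ico).2 (integrableOn_const measure_Ico_lt_top.ne)

lemma integral_cutDist_Iic (a b : ℝ) : ∫ t, cutDist (Set.Iic t) a b = |a - b| := by
  simp only [cutDist_Iic_eq_indicator, integral_indicator_one measurableSet_Ico,
    Real.volume_real_Ico_of_le min_le_max, max_sub_min_eq_abs']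

section Cheeger

variable {V : Type*}

def CheegerIneq [Fintype V] (E' : Finset (V × V)) (α : ℝ) (d : V → V → ℝ) : Prop :=
  α / (2 * (Fintype.card V : ℝ) ^ 2) * ∑ x : V, ∑ y : V, d x y ≤
    1 / (E'.card : ℝ) * ∑ e ∈ E', d e.1 e.2

def HasEdgeExpansion [Fintype V] [DecidableEq V] (E' : Finset (V × V)) (α : ℝ) : Prop :=
  ∀ S : Finset V, 2 * #S ≤ Fintype.card V →
    α * #S * #E' / (Fintype.card V : ℝ) ≤ (#(E'.filter fun e => e.1 ∈ S ∧ e.2 ∉ S) : ℝ)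

lemma CheegerIneq.integral [Fintype V] {Ω : Type*} [MeasurableSpace Ω] {μ : Measure Ω}
    {E' : Finset (V × V)} {α : ℝ} {d : Ω → V → V → ℝ}
    (hd : ∀ x y, Integrable (fun ω => d ω x y) μ) (h : ∀ ω, CheegerIneq E' α (d ω)) :
    CheegerIneq E' α (fun x y => ∫ ω, d ω x y ∂μ) := by
  have hsum : ∀ x, Integrable (fun ω => ∑ y, d ω x y) μ := fun x =>
    integrable_finsetSum _ fun y _ => hd x y
  have hedges : Integrable (fun ω => ∑ e ∈ E', d ω e.1 e.2) μ :=
    integrable_finsetSum _ fun e _ => hd e.1 e.2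
  unfold CheegerIneq
  simp only [← integral_finsetSum _ fun _ _ => hd _ _, ← integral_finsetSum _ fun _ _ => hsum _,
    ← integral_const_mul]
  exact integral_mono ((integrable_finsetSum _ fun x _ => hsum x).const_mul _)
    (hedges.const_mul _) h

lemma sum_sum_cutDist [Fintype V] [DecidableEq V] (S : Finset V) :
    ∑ x : V, ∑ y : V, cutDist (S : Set V) x y = 2 * #S * #Sᶜ := by
  have hsplit : ∀ x y, cutDist (S : Set V) x y =
      (if x ∈ S then 1 else 0) * (if y ∈ Sᶜ then 1 else 0) +
        (if x ∈ Sᶜ then 1 else 0) * (if y ∈ S then 1 else 0) := by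
    intro x y
    by_cases hx : x ∈ S <;> by_cases hy : y ∈ S <;> simp [cutDist, hx, hy]
  simp only [hsplit, sum_add_distrib, ← mul_sum, ← sum_mul, sum_boole, filter_univ_mem]
  ring

lemma card_filter_mem_not_mem_le_sum_cutDist [DecidableEq V] (E' : Finset (V × V))
    (S : Finset V) :
    (#(E'.filter fun e => e.1 ∈ S ∧ e.2 ∉ S) : ℝ) ≤ ∑ e ∈ E', cutDist (S : Set V) e.1 e.2 := by
  rw [card_filter, Nat.cast_sum]
  refine sum_le_sum fun e _ => ?_
  by_cases h1 : e.1 ∈ S <;> by_cases h2 : e.2 ∈ S <;> simp [cutDist, h1, h2]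

lemma cheegerIneq_cutDist_of_expansion [Fintype V] [DecidableEq V] {E' : Finset (V × V)}
    (hE : E'.Nonempty) {α : ℝ} (hα : 0 ≤ α) {S : Finset V}
    (hS : α * #S * #E' / (Fintype.card V : ℝ) ≤ (#(E'.filter fun e => e.1 ∈ S ∧ e.2 ∉ S) : ℝ)) :
    CheegerIneq E' α (cutDist (S : Set V)) := by
  have hV : Nonempty V := ⟨hE.choose.1⟩
  have hn : (0 : ℝ) < Fintype.card V := by exact_mod_cast Fintype.card_pos
  have hm : (0 : ℝ) < #E' := by exact_mod_cast hE.card_pos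
  have hSc : (#Sᶜ : ℝ) ≤ Fintype.card V := by exact_mod_cast card_le_univ Sᶜ
  unfold CheegerIneq
  calc α / (2 * (Fintype.card V : ℝ) ^ 2) * ∑ x : V, ∑ y : V, cutDist (S : Set V) x y
      ≤ α / (2 * (Fintype.card V : ℝ) ^ 2) * (2 * #S * Fintype.card V) := by
        rw [sum_sum_cutDist]; gcongr
    _ = 1 / #E' * (α * #S * #E' / Fintype.card V) := by field_simp
    _ ≤ 1 / #E' * ∑ e ∈ E', cutDist (S : Set V) e.1 e.2 := by
        gcongr
        exact hS.trans (card_filter_mem_not_mem_le_sum_cutDist E' S)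

lemma cheegerIneq_cutDist [Fintype V] [DecidableEq V] {E' : Finset (V × V)}
    (hE : E'.Nonempty) {α : ℝ} (hα : 0 ≤ α)
    (hexp : HasEdgeExpansion E' α) (S : Finset V) :
    CheegerIneq E' α (cutDist (S : Set V)) := by
  rcases le_or_gt (2 * #S) (Fintype.card V) with hS | hS
  · exact cheegerIneq_cutDist_of_expansion hE hα (hexp S hS)
  · rw [← cutDist_compl, ← coe_compl]
    exact cheegerIneq_cutDist_of_expansion hE hα (hexp Sᶜ (by rw [card_compl]; omega))

lemma cheegerIneq_abs_sub [Fintype V] [DecidableEq V] {E' : Finset (V × V)}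
    (hE : E'.Nonempty) {α : ℝ} (hα : 0 ≤ α)
    (hexp : HasEdgeExpansion E' α) (g : V → ℝ) :
    CheegerIneq E' α (fun x y => |g x - g y|) := by
  have h := CheegerIneq.integral (μ := volume) (d := fun t x y => cutDist (Set.Iic t) (g x) (g y))
    (fun x y => integrable_cutDist_Iic _ _) fun t => by
      have hS : ((univ.filter fun v => g v ≤ t : Finset V) : Set V) = g ⁻¹' Set.Iic t := by
        ext; simp
      rw [← cutDist_preimage, ← hS]
      exact cheegerIneq_cutDist hE hα hexp _
  simpa only [integral_cutDist_Iic] using h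

end Cheeger

lemma MeasureTheory.L1.norm_sub_eq_integral_abs_sub {Ω : Type*} [MeasurableSpace Ω]
    {μ : Measure Ω} (f g : Lp ℝ 1 μ) : ‖f - g‖ = ∫ ω, |f ω - g ω| ∂μ := by
  simp only [← dist_eq_norm, L1.dist_eq_integral_dist, Real.dist_eq]

theorem stmt7_general {V : Type*} [Fintype V] [DecidableEq V]
    {Ω : Type*} [MeasurableSpace Ω] (μ : Measure Ω)
    (E' : Finset (V × V)) (hE : E'.Nonempty)
    (α : ℝ) (hα : 0 ≤ α)
    (hexp : ∀ S : Finset V, 2 * S.card ≤ Fintype.card V →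
      α * S.card * E'.card / (Fintype.card V : ℝ) ≤
        ((E'.filter (fun e => e.1 ∈ S ∧ e.2 ∉ S)).card : ℝ))
    (f : V → Lp ℝ 1 μ) :
    (α / (2 * (Fintype.card V : ℝ) ^ 2)) * ∑ x : V, ∑ y : V, ‖f x - f y‖ ≤
      (1 / (E'.card : ℝ)) * ∑ e ∈ E', ‖f e.1 - f e.2‖ := by
  have h := CheegerIneq.integral (μ := μ) (d := fun ω x y => |f x ω - f y ω|)
    (fun x y => ((L1.integrable_coeFn (f x)).sub (L1.integrable_coeFn (f y))).abs)
    fun ω => cheegerIneq_abs_sub hE hα hexp fun v => f v ω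
  simpa only [CheegerIneq, ← L1.norm_sub_eq_integral_abs_sub] using h

/-- Cheeger inequality for L¹-valued maps on a finite graph with edge
expansion α (edges are given as a symmetric set of ordered pairs). -/
theorem stmt7 {V : Type*} [Fintype V] [DecidableEq V]
    {Ω : Type*} [MeasurableSpace Ω] (μ : Measure Ω)
    (E' : Finset (V × V)) (hE : E'.Nonempty)
    (hsym : ∀ x y : V, (x, y) ∈ E' ↔ (y, x) ∈ E')
    (α : ℝ) (hα : 0 ≤ α)
    (hexp : ∀ S : Finset V, 2 * S.card ≤ Fintype.card V →
      α * S.card * E'.card / (Fintype.card V : ℝ) ≤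
        ((E'.filter (fun e => e.1 ∈ S ∧ e.2 ∉ S)).card : ℝ))
    (f : V → Lp ℝ 1 μ) :
    (α / (2 * (Fintype.card V : ℝ) ^ 2)) * ∑ x : V, ∑ y : V, ‖f x - f y‖ ≤
      (1 / (E'.card : ℝ)) * ∑ e ∈ E', ‖f e.1 - f e.2‖ :=
  stmt7_general μ E' hE α hα hexp f
end

section
/- Let (M,d) be an n-point metric space with average distance 1 (i.e. (1/n²)Σ_{x,y} d(x,y) = 1), x₀ a point minimizing average distance, and suppose (1/n²)·Σ_{x,y ∈ B(x₀,4)} d(x,y) ≤ 1/4. Then the 1-Lipschitz map F : M → ℝ, F(x) = d(x, B(x₀,2)), satisfies (1/n²)·Σ_{x,y ∈ M} |F(x)-F(y)| ≥ c for a universal constant c > 0. -/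
open Finset

/-- If the ball B(x₀,4) carries little of the total distance, then the
1-Lipschitz map F(x) = d(x, B(x₀,2)) preserves the average distance up to a
universal constant c > 0. -/
theorem stmt9 :
    ∃ c : ℝ, 0 < c ∧
      ∀ (M : Type) [MetricSpace M] [Fintype M] (x₀ : M),
        (1 / (Fintype.card M : ℝ) ^ 2) * (∑ x : M, ∑ y : M, dist x y) = 1 →
        (∀ x : M, ∑ y : M, dist x₀ y ≤ ∑ y : M, dist x y) →
        (1 / (Fintype.card M : ℝ) ^ 2) *
            (∑ x ∈ Finset.univ.filter (fun x : M => dist x₀ x ≤ 4),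
              ∑ y ∈ Finset.univ.filter (fun y : M => dist x₀ y ≤ 4), dist x y)
          ≤ 1 / 4 →
        c ≤ (1 / (Fintype.card M : ℝ) ^ 2) *
            ∑ x : M, ∑ y : M,
              |Metric.infDist x {z : M | dist x₀ z ≤ 2} -
                Metric.infDist y {z : M | dist x₀ z ≤ 2}| := by
  refine ⟨3/40, by norm_num, ?_⟩
  intro M _ _ x₀ havg hmin hball
  classical
  set n : ℝ := (Fintype.card M : ℝ) with hn
  have hn0 : (0:ℝ) < n := by
    rcases lt_or_ge 0 n with h | h
    · exact h
    · have hz : n = 0 := le_antisymm h (Nat.cast_nonneg _)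
      rw [hz] at havg
      norm_num at havg
  have hn2 : (0:ℝ) < n ^ 2 := by positivity
  set S : Set M := {z : M | dist x₀ z ≤ 2} with hS
  set F : M → ℝ := fun x => Metric.infDist x S with hF
  have hx₀S : x₀ ∈ S := by simp [hS]
  have hSne : S.Nonempty := ⟨x₀, hx₀S⟩
  have hFnonneg : ∀ y : M, 0 ≤ F y := fun y => Metric.infDist_nonneg
  have hFlb : ∀ y : M, dist x₀ y - 2 ≤ F y := by
    intro y
    by_contra hcon
    push_neg at hcon
    rw [hF] at hcon
    obtain ⟨z, hzS, hz⟩ := (Metric.infDist_lt_iff hSne).1 hcon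
    have hz2 : dist x₀ z ≤ 2 := hzS
    have htri := dist_triangle x₀ z y
    rw [dist_comm z y] at htri
    linarith
  -- total sum
  have hT : ∑ x : M, ∑ y : M, dist x y = n ^ 2 := by
    field_simp at havg
    linarith
  -- sum from x₀
  have hx0 : ∑ y : M, dist x₀ y ≤ n := by
    have h1 : n * (∑ y : M, dist x₀ y) ≤ ∑ x : M, ∑ y : M, dist x y := by
      calc n * (∑ y : M, dist x₀ y) = ∑ _x : M, ∑ y : M, dist x₀ y := by
            rw [sum_const, card_univ, nsmul_eq_mul, hn]
        _ ≤ ∑ x : M, ∑ y : M, dist x y := sum_le_sum fun x _ => hmin x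
    rw [hT] at h1
    nlinarith
  -- ball/complement finsets
  set B2 : Finset M := univ.filter (fun z : M => dist x₀ z ≤ 2) with hB2
  set O2 : Finset M := univ.filter (fun z : M => ¬ dist x₀ z ≤ 2) with hO2
  set B4 : Finset M := univ.filter (fun z : M => dist x₀ z ≤ 4) with hB4
  set O4 : Finset M := univ.filter (fun z : M => ¬ dist x₀ z ≤ 4) with hO4
  have hcard2 : (B2.card : ℝ) + O2.card = n := by
    rw [hB2, hO2, hn]
    rw [← Nat.cast_add, card_filter_add_card_filter_not, card_univ]
  have hO2le : 2 * (O2.card : ℝ) ≤ n := by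
    have h1 : 2 * (O2.card : ℝ) ≤ ∑ y ∈ O2, dist x₀ y := by
      rw [mul_comm]
      calc (O2.card : ℝ) * 2 = ∑ _y ∈ O2, (2:ℝ) := by rw [sum_const, nsmul_eq_mul]
        _ ≤ ∑ y ∈ O2, dist x₀ y := by
            apply sum_le_sum
            intro y hy
            rw [hO2, mem_filter] at hy
            linarith [lt_of_not_ge hy.2]
    have h2 : ∑ y ∈ O2, dist x₀ y ≤ ∑ y : M, dist x₀ y :=
      sum_le_sum_of_subset_of_nonneg (filter_subset _ _) (fun y _ _ => dist_nonneg)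
    linarith
  have hB2card : n / 2 ≤ (B2.card : ℝ) := by linarith
  -- S_out
  set Sout : ℝ := ∑ y ∈ O4, dist x₀ y with hSout
  have hSoutnn : 0 ≤ Sout := sum_nonneg fun y _ => dist_nonneg
  have hO4le : 4 * (O4.card : ℝ) ≤ Sout := by
    rw [hSout, mul_comm]
    calc (O4.card : ℝ) * 4 = ∑ _y ∈ O4, (4:ℝ) := by rw [sum_const, nsmul_eq_mul]
      _ ≤ ∑ y ∈ O4, dist x₀ y := by
          apply sum_le_sum
          intro y hy
          rw [hO4, mem_filter] at hy
          linarith [lt_of_not_ge hy.2]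
  -- key one-sided bound
  have hA : ∀ (f : M → M → ℝ), (∀ x y, f x y = dist x y) →
      ∑ x ∈ O4, ∑ y : M, f x y ≤ (5/4) * n * Sout := by
    intro f hf
    have h1 : ∑ x ∈ O4, ∑ y : M, f x y ≤ ∑ x ∈ O4, (n * dist x₀ x + ∑ y : M, dist x₀ y) := by
      apply sum_le_sum
      intro x hx
      calc ∑ y : M, f x y ≤ ∑ y : M, (dist x₀ x + dist x₀ y) := by
            apply sum_le_sum
            intro y _
            rw [hf]
            calc dist x y ≤ dist x x₀ + dist x₀ y := dist_triangle _ _ _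
              _ = dist x₀ x + dist x₀ y := by rw [dist_comm]
        _ = n * dist x₀ x + ∑ y : M, dist x₀ y := by
            rw [sum_add_distrib, sum_const, card_univ, nsmul_eq_mul, hn]
    have h2 : ∑ x ∈ O4, (n * dist x₀ x + ∑ y : M, dist x₀ y)
        = n * Sout + (O4.card : ℝ) * (∑ y : M, dist x₀ y) := by
      rw [sum_add_distrib, ← mul_sum, sum_const, nsmul_eq_mul, hSout]
    have h3 : (O4.card : ℝ) * (∑ y : M, dist x₀ y) ≤ (Sout / 4) * n := by
      apply mul_le_mul (by linarith) hx0 (sum_nonneg fun y _ => dist_nonneg) (by linarith)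
    calc ∑ x ∈ O4, ∑ y : M, f x y ≤ n * Sout + (O4.card : ℝ) * (∑ y : M, dist x₀ y) := by
          rw [← h2]; exact h1
      _ ≤ n * Sout + (Sout / 4) * n := by linarith
      _ = (5/4) * n * Sout := by ring
  -- split the total sum
  have hsplit : ∑ x : M, ∑ y : M, dist x y
      = (∑ x ∈ B4, ∑ y ∈ B4, dist x y) + (∑ x ∈ B4, ∑ y ∈ O4, dist x y)
        + ∑ x ∈ O4, ∑ y : M, dist x y := by
    rw [← sum_filter_add_sum_filter_not univ (fun z : M => dist x₀ z ≤ 4)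
      (fun x => ∑ y : M, dist x y)]
    congr 1
    rw [← hB4]
    rw [← sum_add_distrib]
    apply sum_congr rfl
    intro x _
    rw [← sum_filter_add_sum_filter_not univ (fun z : M => dist x₀ z ≤ 4) (fun y => dist x y)]
  have hballsum : ∑ x ∈ B4, ∑ y ∈ B4, dist x y ≤ n ^ 2 / 4 := by
    nlinarith [hball]
  have hBO : ∑ x ∈ B4, ∑ y ∈ O4, dist x y ≤ (5/4) * n * Sout := by
    have h1 : ∑ x ∈ B4, ∑ y ∈ O4, dist x y ≤ ∑ x : M, ∑ y ∈ O4, dist x y :=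
      sum_le_sum_of_subset_of_nonneg (filter_subset _ _)
        (fun x _ _ => sum_nonneg fun y _ => dist_nonneg)
    have h2 : ∑ x : M, ∑ y ∈ O4, dist x y = ∑ x ∈ O4, ∑ y : M, (fun a b => dist b a) x y :=
      sum_comm
    have h3 := hA (fun a b => dist b a) (fun a b => dist_comm _ _)
    rw [h2] at h1
    linarith
  have hOU : ∑ x ∈ O4, ∑ y : M, dist x y ≤ (5/4) * n * Sout := hA _ (fun _ _ => rfl)
  have hSoutlb : (3/10) * n ≤ Sout := by
    have : n ^ 2 ≤ n ^ 2 / 4 + (5/4) * n * Sout + (5/4) * n * Sout := by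
      rw [← hT, hsplit]; linarith
    nlinarith
  -- sum of F over O4
  have hFO4 : (3/20) * n ≤ ∑ y ∈ O4, F y := by
    have h1 : Sout - 2 * (O4.card : ℝ) ≤ ∑ y ∈ O4, F y := by
      calc Sout - 2 * (O4.card : ℝ) = ∑ y ∈ O4, (dist x₀ y - 2) := by
            rw [sum_sub_distrib, sum_const, nsmul_eq_mul, hSout]; ring
        _ ≤ ∑ y ∈ O4, F y := sum_le_sum fun y _ => hFlb y
    linarith
  -- main lower bound
  have hmain : (3/40) * n ^ 2 ≤ ∑ x : M, ∑ y : M, |F x - F y| := by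
    have h1 : ∑ x ∈ B2, ∑ y ∈ O4, |F x - F y| ≤ ∑ x : M, ∑ y : M, |F x - F y| := by
      calc ∑ x ∈ B2, ∑ y ∈ O4, |F x - F y| ≤ ∑ x ∈ B2, ∑ y : M, |F x - F y| := by
            apply sum_le_sum
            intro x _
            exact sum_le_sum_of_subset_of_nonneg (filter_subset _ _)
              (fun y _ _ => abs_nonneg _)
        _ ≤ ∑ x : M, ∑ y : M, |F x - F y| :=
            sum_le_sum_of_subset_of_nonneg (filter_subset _ _)
              (fun x _ _ => sum_nonneg fun y _ => abs_nonneg _)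
    have h2 : ∑ x ∈ B2, ∑ y ∈ O4, |F x - F y| = (B2.card : ℝ) * ∑ y ∈ O4, F y := by
      have hcong : ∀ x ∈ B2, ∑ y ∈ O4, |F x - F y| = ∑ y ∈ O4, F y := by
        intro x hx
        rw [hB2, mem_filter] at hx
        have hxF : F x = 0 := Metric.infDist_zero_of_mem hx.2
        apply sum_congr rfl
        intro y _
        rw [hxF, zero_sub, abs_neg, abs_of_nonneg (hFnonneg y)]
      rw [sum_congr rfl hcong, sum_const, nsmul_eq_mul]
    have h3 : (n / 2) * ((3/20) * n) ≤ (B2.card : ℝ) * ∑ y ∈ O4, F y := by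
      apply mul_le_mul hB2card hFO4 (by positivity) (Nat.cast_nonneg _)
    calc (3/40) * n ^ 2 = (n / 2) * ((3/20) * n) := by ring
      _ ≤ (B2.card : ℝ) * ∑ y ∈ O4, F y := h3
      _ = ∑ x ∈ B2, ∑ y ∈ O4, |F x - F y| := h2.symm
      _ ≤ _ := h1
  calc (3/40 : ℝ) = (1 / n ^ 2) * ((3/40) * n ^ 2) := by field_simp
    _ ≤ (1 / n ^ 2) * ∑ x : M, ∑ y : M, |F x - F y| := by
        apply mul_le_mul_of_nonneg_left hmain (by positivity)
end

section
/- If a distribution μ over subsets Z of a finite metric space (M,d) satisfies, for all x,y ∈ M with d(x,y) ≥ Δ, μ({Z : y ∈ Z and d(x,Z) ≥ Δ/ζ}) ≥ p, then the map φ : M → L²(μ) given by φ(x)(Z) = d(x,Z) is 1-Lipschitz and satisfies ‖φ(x) - φ(y)‖_{L²(μ)} ≥ Δ√p/ζ whenever d(x,y) ≥ Δ. -/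
/-!
For each Z the map x ↦ d(x,Z) is 1-Lipschitz, so the pointwise bound
|d(x,Z) - d(y,Z)| ≤ d(x,y) integrates to the Lipschitz bound in L²(μ). For the lower bound,
when d(x,y) ≥ Δ, with probability at least p the set Z contains y (so d(y,Z) = 0) while
d(x,Z) ≥ Δ/ζ; on that event the integrand is at least (Δ/ζ)², and Markov's inequality gives
‖φ(x) - φ(y)‖² ≥ p (Δ/ζ)².
-/

open MeasureTheory

namespace Metric

variable {M : Type*} [MetricSpace M]

theorem abs_infDist_sub_infDist_le (x y : M) (s : Set M) :
    |infDist x s - infDist y s| ≤ dist x y := by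
  simpa [Real.dist_eq] using (lipschitz_infDist_pt s).dist_le_mul x y

end Metric

section L2Bounds

variable {Ω : Type*} [MeasurableSpace Ω] {μ : Measure Ω} {f : Ω → ℝ}

theorem integrable_sq_of_abs_le [IsFiniteMeasure μ] {C : ℝ}
    (hf : AEStronglyMeasurable f μ) (hfC : ∀ᵐ ω ∂μ, |f ω| ≤ C) :
    Integrable (fun ω ↦ f ω ^ 2) μ :=
  .of_bound (hf.pow 2) (C ^ 2) <| hfC.mono fun ω hω ↦ by
    simpa [Real.norm_eq_abs] using sq_le_sq.mpr (hω.trans (le_abs_self C))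

theorem sqrt_integral_sq_le_of_abs_le [IsProbabilityMeasure μ] {C : ℝ}
    (hf : AEStronglyMeasurable f μ) (hfC : ∀ᵐ ω ∂μ, |f ω| ≤ C) :
    √(∫ ω, f ω ^ 2 ∂μ) ≤ C := by
  obtain ⟨ω, hω⟩ := hfC.exists
  have hint : ∫ ω, f ω ^ 2 ∂μ ≤ C ^ 2 :=
    calc ∫ ω, f ω ^ 2 ∂μ ≤ ∫ _, C ^ 2 ∂μ :=
          integral_mono_ae (integrable_sq_of_abs_le hf hfC) (integrable_const _)
            (hfC.mono fun _ h ↦ sq_le_sq.mpr (h.trans (le_abs_self C)))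
      _ = C ^ 2 := by simp
  exact Real.sqrt_le_iff.mpr ⟨(abs_nonneg _).trans hω, hint⟩

theorem sqrt_measureReal_mul_le_sqrt_integral_sq [IsFiniteMeasure μ] {s : Set Ω} {c : ℝ}
    (hf : Integrable (fun ω ↦ f ω ^ 2) μ) (hc : 0 ≤ c) (hfc : ∀ ω ∈ s, c ≤ |f ω|) :
    √(μ.real s) * c ≤ √(∫ ω, f ω ^ 2 ∂μ) := by
  have hs : s ⊆ {ω | c ^ 2 ≤ f ω ^ 2} := fun ω hω ↦
    show c ^ 2 ≤ f ω ^ 2 from sq_le_sq.mpr ((abs_of_nonneg hc).trans_le (hfc ω hω))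
  have hmarkov : μ.real s * c ^ 2 ≤ ∫ ω, f ω ^ 2 ∂μ := by
    calc μ.real s * c ^ 2 ≤ c ^ 2 * μ.real {ω | c ^ 2 ≤ f ω ^ 2} := by
          rw [mul_comm]; gcongr; exact measure_ne_top _ _
      _ ≤ ∫ ω, f ω ^ 2 ∂μ :=
          mul_meas_ge_le_integral_of_nonneg (.of_forall fun ω ↦ sq_nonneg (f ω)) hf _
  calc √(μ.real s) * c = √(μ.real s * c ^ 2) := by
        rw [Real.sqrt_mul measureReal_nonneg, Real.sqrt_sq hc]
    _ ≤ √(∫ ω, f ω ^ 2 ∂μ) := Real.sqrt_le_sqrt hmarkov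

end L2Bounds

theorem stmt19_general {M : Type*} [MetricSpace M] [MeasurableSpace (Set M)]
    (hmeas : ∀ s : Set (Set M), MeasurableSet s)
    (μ : Measure (Set M)) [IsProbabilityMeasure μ]
    (Δ ζ p : ℝ) (hΔ : 0 < Δ) (hζ : 0 < ζ)
    (hμ : ∀ x y : M, Δ ≤ dist x y →
      ENNReal.ofReal p ≤ μ {Z : Set M | y ∈ Z ∧ Δ / ζ ≤ Metric.infDist x Z}) :
    (∀ x y : M,
      Real.sqrt (∫ Z, (Metric.infDist x Z - Metric.infDist y Z) ^ 2 ∂μ) ≤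
        dist x y) ∧
    (∀ x y : M, Δ ≤ dist x y →
      Δ * Real.sqrt p / ζ ≤
        Real.sqrt (∫ Z, (Metric.infDist x Z - Metric.infDist y Z) ^ 2 ∂μ)) := by
  have : DiscreteMeasurableSpace (Set M) := ⟨hmeas⟩
  have hf (x y : M) : AEStronglyMeasurable (fun Z ↦ Metric.infDist x Z - Metric.infDist y Z) μ :=
    Measurable.of_discrete.aestronglyMeasurable
  have hbound (x y : M) := ae_of_all μ (Metric.abs_infDist_sub_infDist_le x y)
  refine ⟨fun x y ↦ sqrt_integral_sq_le_of_abs_le (hf x y) (hbound x y), fun x y hxy ↦ ?_⟩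
  have hp : p ≤ μ.real {Z : Set M | y ∈ Z ∧ Δ / ζ ≤ Metric.infDist x Z} :=
    (ENNReal.ofReal_le_iff_le_toReal (measure_ne_top _ _)).mp (hμ x y hxy)
  calc Δ * √p / ζ = √p * (Δ / ζ) := by ring
    _ ≤ _ := by
      refine (mul_le_mul_of_nonneg_right (Real.sqrt_le_sqrt hp) (by positivity)).trans ?_
      refine sqrt_measureReal_mul_le_sqrt_integral_sq ?_ (by positivity) ?_
      · exact integrable_sq_of_abs_le (hf x y) (hbound x y)
      · rintro Z ⟨hyZ, hxZ⟩
        rwa [Metric.infDist_zero_of_mem hyZ, sub_zero, abs_of_nonneg Metric.infDist_nonneg]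

/-- Random zero sets give 1-Lipschitz maps into L²(μ) that preserve distances Δ
up to a factor ζ/√p: φ(x) = (Z ↦ d(x,Z)). -/
theorem stmt19 {M : Type*} [MetricSpace M] [Fintype M] [MeasurableSpace (Set M)]
    (hmeas : ∀ s : Set (Set M), MeasurableSet s)
    (μ : Measure (Set M)) [IsProbabilityMeasure μ]
    (Δ ζ p : ℝ) (hΔ : 0 < Δ) (hζ : 0 < ζ) (hp0 : 0 < p) (hp1 : p < 1)
    (hμ : ∀ x y : M, Δ ≤ dist x y →
      ENNReal.ofReal p ≤ μ {Z : Set M | y ∈ Z ∧ Δ / ζ ≤ Metric.infDist x Z}) :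
    (∀ x y : M,
      Real.sqrt (∫ Z, (Metric.infDist x Z - Metric.infDist y Z) ^ 2 ∂μ) ≤
        dist x y) ∧
    (∀ x y : M, Δ ≤ dist x y →
      Δ * Real.sqrt p / ζ ≤
        Real.sqrt (∫ Z, (Metric.infDist x Z - Metric.infDist y Z) ^ 2 ∂μ)) :=
  stmt19_general hmeas μ Δ ζ p hΔ hζ hμ
end
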